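/- arXiv:math/0602404 — 5 statements merged into one kernel-verified Lean document; each statement's English description precedes it below -/
import Mathlib

section
/- Under the conformal β-change *L = e^σ L + β, the angular metric tensor transforms as *h_{ij} = τ h_{ij}, where τ = e^σ (*L / L). Consequently the tensor h_{ij}/L is σ-invariant: *h_{ij}/*L = e^σ (h_{ij}/L). -/
/-- Under the conformal β-change `*L = e^σ L + β`, the angular metric tensor
`h_{ij} = L ∂²L/∂yⁱ∂yʲ` transforms as `*h_{ij} = τ h_{ij}` with `τ = e^σ (*L/L)`;
consequently `h_{ij}/L` is σ-invariant: `*h_{ij}/*L = e^σ (h_{ij}/L)`. -/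
theorem conformal_beta_change_angular_metric
    (n : ℕ) (L : (Fin n → ℝ) → ℝ) (σ : ℝ) (b : Fin n → ℝ)
    (Ls : (Fin n → ℝ) → ℝ)
    (hLs : ∀ y, Ls y = Real.exp σ * L y + ∑ i, b i * y i)
    (y : Fin n → ℝ) (hy : y ≠ 0)
    (hL : ContDiffAt ℝ 2 L y) (hL0 : L y ≠ 0) (hLs0 : Ls y ≠ 0)
    (h hs : Fin n → Fin n → ℝ)
    (hdef : ∀ i j, h i j =
      L y * fderiv ℝ (fun z => fderiv ℝ L z (Pi.single i 1)) y (Pi.single j 1))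
    (hsdef : ∀ i j, hs i j =
      Ls y * fderiv ℝ (fun z => fderiv ℝ Ls z (Pi.single i 1)) y (Pi.single j 1))
    (τ : ℝ) (hτ : τ = Real.exp σ * (Ls y / L y)) :
    (∀ i j, hs i j = τ * h i j) ∧
    (∀ i j, hs i j / Ls y = Real.exp σ * (h i j / L y)) := by
  -- B is the linear functional z ↦ ∑ i, b i * z i
  set B : (Fin n → ℝ) →L[ℝ] ℝ := ∑ i, b i • ContinuousLinearMap.proj i with hBdef
  have hB : ∀ z, B z = ∑ i, b i * z i := by
    intro z
    simp [hBdef, ContinuousLinearMap.sum_apply]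
  have hLs' : Ls = fun z => Real.exp σ * L z + B z :=
    funext fun z => by rw [hLs, hB]
  have hev : ∀ᶠ z in nhds y, DifferentiableAt ℝ L z :=
    (hL.eventually (by norm_num)).mono fun z hz => hz.differentiableAt (by norm_num)
  have key : ∀ v : Fin n → ℝ,
      fderiv ℝ (fun z => fderiv ℝ Ls z v) y
        = Real.exp σ • fderiv ℝ (fun z => fderiv ℝ L z v) y := by
    intro v
    have h1 : (fun z => fderiv ℝ Ls z v) =ᶠ[nhds y]
        (fun z => Real.exp σ * fderiv ℝ L z v + B v) := by
      filter_upwards [hev] with z hz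
      rw [hLs']
      rw [fderiv_fun_add (hz.const_mul _) B.differentiableAt]
      simp [fderiv_const_mul hz, B.fderiv]
    have hd1 : DifferentiableAt ℝ (fun z => fderiv ℝ L z v) y := by
      have h2 : ContDiffAt ℝ 1 (fderiv ℝ L) y := hL.fderiv_right (by norm_num)
      exact (h2.differentiableAt (by norm_num)).clm_apply (differentiableAt_const v)
    rw [h1.fderiv_eq, fderiv_add_const, fderiv_const_mul hd1]
  have main : ∀ i j, hs i j = τ * h i j := by
    intro i j
    rw [hsdef, hdef, key, hτ]
    simp only [ContinuousLinearMap.smul_apply, smul_eq_mul]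
    field_simp
  refine ⟨main, fun i j => ?_⟩
  rw [main i j, hτ]
  field_simp
end

section
/- Under the conformal β-change *L = e^σ L + β, the Cartan (h)hv-torsion tensor transforms as *c_{ijk} = τ [c_{ijk} + (1/(2 *L)) (h_{ij} m_k + h_{jk} m_i + h_{ki} m_j)], where τ = e^σ(*L/L) and m_i = b_i − (β/L) l_i. -/
namespace ConformalBetaAux

variable {n : ℕ}

/-- First directional derivative. -/
noncomputable def D1 (L : (Fin n → ℝ) → ℝ) (i : Fin n) (z : Fin n → ℝ) : ℝ :=
  fderiv ℝ L z (Pi.single i 1)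

/-- Second directional derivative. -/
noncomputable def D2 (L : (Fin n → ℝ) → ℝ) (i j : Fin n) (z : Fin n → ℝ) : ℝ :=
  fderiv ℝ (fun w => D1 L i w) z (Pi.single j 1)

theorem diffAt {L : (Fin n → ℝ) → ℝ} {U : Set (Fin n → ℝ)} (hU : IsOpen U)
    (hL : ContDiffOn ℝ 3 L U) {z : Fin n → ℝ} (hz : z ∈ U) : DifferentiableAt ℝ L z :=
  (hL.contDiffAt (hU.mem_nhds hz)).differentiableAt (by norm_num)

theorem contDiffAt_D1 {L : (Fin n → ℝ) → ℝ} {U : Set (Fin n → ℝ)} (hU : IsOpen U)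
    (hL : ContDiffOn ℝ 3 L U) {z : Fin n → ℝ} (hz : z ∈ U) (i : Fin n) :
    ContDiffAt ℝ 2 (fun w => D1 L i w) z :=
  (((hL.contDiffAt (hU.mem_nhds hz)).fderiv_right (m := 2)
    (by norm_num)).clm_apply contDiffAt_const)

theorem diffAt_D1 {L : (Fin n → ℝ) → ℝ} {U : Set (Fin n → ℝ)} (hU : IsOpen U)
    (hL : ContDiffOn ℝ 3 L U) {z : Fin n → ℝ} (hz : z ∈ U) (i : Fin n) :
    DifferentiableAt ℝ (fun w => D1 L i w) z :=
  (contDiffAt_D1 hU hL hz i).differentiableAt (by norm_num)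

theorem diffAt_D2 {L : (Fin n → ℝ) → ℝ} {U : Set (Fin n → ℝ)} (hU : IsOpen U)
    (hL : ContDiffOn ℝ 3 L U) {z : Fin n → ℝ} (hz : z ∈ U) (i j : Fin n) :
    DifferentiableAt ℝ (fun w => D2 L i j w) z :=
  ((((contDiffAt_D1 hU hL hz i).fderiv_right (m := 1)
    (by norm_num)).clm_apply contDiffAt_const).differentiableAt (by norm_num))

/-- Derivative of the square. -/
theorem sq_deriv {L : (Fin n → ℝ) → ℝ} {U : Set (Fin n → ℝ)} (hU : IsOpen U)
    (hL : ContDiffOn ℝ 3 L U) {z : Fin n → ℝ} (hz : z ∈ U) (i : Fin n) :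
    fderiv ℝ (fun w => (L w)^2) z (Pi.single i 1) = 2 * (L z * D1 L i z) := by
  have hsq : (fun w => (L w)^2) = fun w => L w * L w := by funext w; ring
  rw [hsq, fderiv_fun_mul (diffAt hU hL hz) (diffAt hU hL hz)]
  simp only [ContinuousLinearMap.add_apply, ContinuousLinearMap.smul_apply, smul_eq_mul, D1]
  ring

/-- Second derivative of the square. -/
theorem sq_deriv2 {L : (Fin n → ℝ) → ℝ} {U : Set (Fin n → ℝ)} (hU : IsOpen U)
    (hL : ContDiffOn ℝ 3 L U) {z : Fin n → ℝ} (hz : z ∈ U) (i j : Fin n) :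
    fderiv ℝ (fun z' => fderiv ℝ (fun w => (L w)^2) z' (Pi.single i 1)) z (Pi.single j 1)
      = 2 * (L z * D2 L i j z + D1 L i z * D1 L j z) := by
  have hev : (fun z' => fderiv ℝ (fun w => (L w)^2) z' (Pi.single i 1)) =ᶠ[nhds z]
      (fun z' => 2 * (L z' * D1 L i z')) := by
    filter_upwards [hU.mem_nhds hz] with w hw using sq_deriv hU hL hw i
  rw [hev.fderiv_eq, fderiv_const_mul ((diffAt hU hL hz).fun_mul (diffAt_D1 hU hL hz i)) 2,
    fderiv_fun_mul (diffAt hU hL hz) (diffAt_D1 hU hL hz i)]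
  simp only [ContinuousLinearMap.smul_apply, ContinuousLinearMap.add_apply, smul_eq_mul, D1, D2]

end ConformalBetaAux

open ConformalBetaAux in
/-- Under the conformal β-change `*L = e^σ L + β`, the Cartan (h)hv-torsion tensor
`c_{ijk} = (1/2) ∂g_{ij}/∂y^k` transforms as
`*c_{ijk} = τ [c_{ijk} + (1/(2 *L)) (h_{ij} m_k + h_{jk} m_i + h_{ki} m_j)]`,
where `τ = e^σ(*L/L)` and `m_i = b_i − (β/L) l_i`. -/
theorem conformal_beta_change_cartan_tensor
    (n : ℕ) (L : (Fin n → ℝ) → ℝ) (σ : ℝ) (b : Fin n → ℝ)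
    (Ls : (Fin n → ℝ) → ℝ)
    (hLs : ∀ y, Ls y = Real.exp σ * L y + ∑ i, b i * y i)
    (y : Fin n → ℝ) (hy : y ≠ 0)
    (hL : ContDiffAt ℝ 3 L y) (hL0 : L y ≠ 0) (hLs0 : Ls y ≠ 0)
    (g gs : (Fin n → ℝ) → Fin n → Fin n → ℝ)
    (hg : ∀ z i j, g z i j =
      (1/2) * fderiv ℝ (fun z' => fderiv ℝ (fun w => (L w)^2) z' (Pi.single i 1)) z (Pi.single j 1))
    (hgs : ∀ z i j, gs z i j =
      (1/2) * fderiv ℝ (fun z' => fderiv ℝ (fun w => (Ls w)^2) z' (Pi.single i 1)) z (Pi.single j 1))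
    (c cs : Fin n → Fin n → Fin n → ℝ)
    (hc : ∀ i j k, c i j k = (1/2) * fderiv ℝ (fun z => g z i j) y (Pi.single k 1))
    (hcs : ∀ i j k, cs i j k = (1/2) * fderiv ℝ (fun z => gs z i j) y (Pi.single k 1))
    (l : Fin n → ℝ) (hl : ∀ i, l i = fderiv ℝ L y (Pi.single i 1))
    (h : Fin n → Fin n → ℝ) (hh : ∀ i j, h i j = g y i j - l i * l j)
    (β : ℝ) (hβ : β = ∑ i, b i * y i)
    (m : Fin n → ℝ) (hm : ∀ i, m i = b i - (β / L y) * l i)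
    (τ : ℝ) (hτ : τ = Real.exp σ * (Ls y / L y)) :
    ∀ i j k, cs i j k =
      τ * (c i j k + (1 / (2 * Ls y)) * (h i j * m k + h j k * m i + h k i * m j)) := by
  -- Obtain an open set on which `L` is `C³`.
  obtain ⟨u, hu, hCDu⟩ := hL.contDiffOn (le_refl 3) (by simp)
  obtain ⟨U, hUu, hUo, hyU⟩ := mem_nhds_iff.1 hu
  have hCD : ContDiffOn ℝ 3 L U := hCDu.mono hUu
  set e := Real.exp σ with he
  -- The linear form `B` and its derivative.
  set B : (Fin n → ℝ) → ℝ := fun w => ∑ i, b i * w i with hBdef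
  set Bl : (Fin n → ℝ) →L[ℝ] ℝ := ∑ i : Fin n, b i • ContinuousLinearMap.proj i with hBldef
  have hBlApp : ∀ v : Fin n → ℝ, Bl v = ∑ i, b i * v i := by
    intro v
    simp [hBldef, ContinuousLinearMap.sum_apply]
  have hBlk : ∀ a : Fin n, Bl (Pi.single a 1) = b a := by
    intro a
    rw [hBlApp]
    simp [Pi.single_apply, mul_ite, Finset.sum_ite_eq']
  have hBfun : ⇑Bl = B := by funext v; rw [hBlApp]
  have hBder : ∀ z, HasFDerivAt B Bl z := by
    intro z
    rw [← hBfun]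
    exact Bl.hasFDerivAt
  have hBy : B y = β := hβ.symm
  have hLseq : Ls = fun w => e * L w + B w := by funext w; rw [hLs w]
  have hCDs : ContDiffOn ℝ 3 Ls U := by
    rw [hLseq]
    exact (contDiffOn_const.mul hCD).add ((hBfun ▸ Bl.contDiff).contDiffOn)
  -- `g` on `U` in terms of derivatives of `L`.
  have hgU : ∀ z ∈ U, ∀ i j, g z i j = L z * D2 L i j z + D1 L i z * D1 L j z := by
    intro z hz i j
    rw [hg, sq_deriv2 hUo hCD hz i j]; ring
  -- first derivatives of `Ls` in terms of those of `L`
  have hD1s : ∀ z ∈ U, ∀ i, D1 Ls i z = e * D1 L i z + b i := by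
    intro z hz i
    have h1 : HasFDerivAt (fun w => e * L w + B w) (e • fderiv ℝ L z + Bl) z :=
      ((diffAt hUo hCD hz).hasFDerivAt.const_mul e).add (hBder z)
    have h2 : HasFDerivAt Ls (e • fderiv ℝ L z + Bl) z := by rw [hLseq]; exact h1
    simp only [D1, h2.fderiv, ContinuousLinearMap.add_apply, ContinuousLinearMap.smul_apply,
      smul_eq_mul, hBlk]
  have hD2s : ∀ z ∈ U, ∀ i j, D2 Ls i j z = e * D2 L i j z := by
    intro z hz i j
    have hev : (fun w => D1 Ls i w) =ᶠ[nhds z] (fun w => e * D1 L i w + b i) := by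
      filter_upwards [hUo.mem_nhds hz] with w hw using hD1s w hw i
    simp only [D2, hev.fderiv_eq, fderiv_add_const,
      fderiv_const_mul (diffAt_D1 hUo hCD hz i) e, ContinuousLinearMap.smul_apply, smul_eq_mul]
  -- `gs` on `U` in terms of derivatives of `L`.
  have hgsU : ∀ z ∈ U, ∀ i j, gs z i j =
      (e * L z + B z) * (e * D2 L i j z) + (e * D1 L i z + b i) * (e * D1 L j z + b j) := by
    intro z hz i j
    rw [hgs, sq_deriv2 hUo hCDs hz i j, hD2s z hz i j, hD1s z hz i, hD1s z hz j]
    have : Ls z = e * L z + B z := by rw [hLseq]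
    rw [this]; ring
  intro i j k
  -- symmetry of second derivatives
  have hdd : DifferentiableAt ℝ (fderiv ℝ L) y :=
    (hL.fderiv_right (m := 2) (by norm_num)).differentiableAt (by norm_num)
  have hkey : ∀ a b' : Fin n, D2 L a b' y
      = fderiv ℝ (fderiv ℝ L) y (Pi.single b' 1) (Pi.single a 1) := by
    intro a b'
    have h1 : HasFDerivAt (fun w => D1 L a w)
        ((ContinuousLinearMap.apply ℝ ℝ (Pi.single a 1)).comp (fderiv ℝ (fderiv ℝ L) y)) y := by
      have h0 := (ContinuousLinearMap.apply ℝ ℝ (Pi.single a 1)).hasFDerivAt.comp y hdd.hasFDerivAt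
      exact h0
    calc D2 L a b' y = fderiv ℝ (fun w => D1 L a w) y (Pi.single b' 1) := rfl
      _ = ((ContinuousLinearMap.apply ℝ ℝ (Pi.single a 1)).comp
            (fderiv ℝ (fderiv ℝ L) y)) (Pi.single b' 1) := by rw [h1.fderiv]
      _ = fderiv ℝ (fderiv ℝ L) y (Pi.single b' 1) (Pi.single a 1) := rfl
  have hsymm : ∀ a b' : Fin n, D2 L a b' y = D2 L b' a y := by
    intro a b'
    rw [hkey a b', hkey b' a]
    exact hL.isSymmSndFDerivAt (by norm_num) (Pi.single b' 1) (Pi.single a 1)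
  -- derivative data at `y`
  have hLd := (diffAt hUo hCD hyU).hasFDerivAt
  have hD1d : ∀ a, HasFDerivAt (fun w => D1 L a w) (fderiv ℝ (fun w => D1 L a w) y) y :=
    fun a => (diffAt_D1 hUo hCD hyU a).hasFDerivAt
  have hD2d : ∀ a b', HasFDerivAt (fun w => D2 L a b' w) (fderiv ℝ (fun w => D2 L a b' w) y) y :=
    fun a b' => (diffAt_D2 hUo hCD hyU a b').hasFDerivAt
  -- formula for `c`
  have Ec : c i j k = (1/2) * (L y * fderiv ℝ (fun w => D2 L i j w) y (Pi.single k 1)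
      + D2 L i j y * D1 L k y + D1 L i y * D2 L j k y + D1 L j y * D2 L i k y) := by
    have hev : (fun z => g z i j) =ᶠ[nhds y]
        (fun z => L z * D2 L i j z + D1 L i z * D1 L j z) := by
      filter_upwards [hUo.mem_nhds hyU] with w hw using hgU w hw i j
    have hprod : HasFDerivAt (fun z => L z * D2 L i j z + D1 L i z * D1 L j z)
        ((L y • fderiv ℝ (fun w => D2 L i j w) y + D2 L i j y • fderiv ℝ L y)
          + (D1 L i y • fderiv ℝ (fun w => D1 L j w) y
            + D1 L j y • fderiv ℝ (fun w => D1 L i w) y)) y :=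
      (hLd.mul (hD2d i j)).add ((hD1d i).mul (hD1d j))
    rw [hc, hev.fderiv_eq, hprod.fderiv]
    simp only [ContinuousLinearMap.add_apply, ContinuousLinearMap.smul_apply, smul_eq_mul, D1, D2]
    ring
  -- formula for `cs`
  have Ecs : cs i j k = (1/2) * ((e * L y + β) * (e * fderiv ℝ (fun w => D2 L i j w) y
        (Pi.single k 1))
      + (e * D2 L i j y) * (e * D1 L k y + b k)
      + (e * D1 L i y + b i) * (e * D2 L j k y)
      + (e * D1 L j y + b j) * (e * D2 L i k y)) := by
    have hev : (fun z => gs z i j) =ᶠ[nhds y]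
        (fun z => (e * L z + B z) * (e * D2 L i j z)
          + (e * D1 L i z + b i) * (e * D1 L j z + b j)) := by
      filter_upwards [hUo.mem_nhds hyU] with w hw using hgsU w hw i j
    have hu1 : HasFDerivAt (fun z => e * L z + B z) (e • fderiv ℝ L y + Bl) y :=
      (hLd.const_mul e).add (hBder y)
    have hu2 : HasFDerivAt (fun z => e * D2 L i j z)
        (e • fderiv ℝ (fun w => D2 L i j w) y) y := (hD2d i j).const_mul e
    have hu3 : HasFDerivAt (fun z => e * D1 L i z + b i)
        (e • fderiv ℝ (fun w => D1 L i w) y) y := ((hD1d i).const_mul e).add_const (b i)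
    have hu4 : HasFDerivAt (fun z => e * D1 L j z + b j)
        (e • fderiv ℝ (fun w => D1 L j w) y) y := ((hD1d j).const_mul e).add_const (b j)
    have hprod := (hu1.fun_mul hu2).fun_add (hu3.fun_mul hu4)
    rw [hcs, hev.fderiv_eq, hprod.fderiv]
    simp only [ContinuousLinearMap.add_apply, ContinuousLinearMap.smul_apply, smul_eq_mul,
      hBlk, hBy, D1, D2]
    ring
  -- the angular metric in terms of second derivatives of `L`
  have Eh : ∀ a b' : Fin n, h a b' = L y * D2 L a b' y := by
    intro a b'
    rw [hh, hgU y hyU a b', hl, hl]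
    simp only [D1]
    ring
  -- final algebraic computation
  have hSy : Ls y = e * L y + β := by rw [hLs y, ← hβ]
  have hS0 : e * L y + β ≠ 0 := hSy ▸ hLs0
  rw [Ecs, hτ, hSy, Ec, Eh i j, Eh j k, Eh k i, hsymm k i, hm, hm, hm, hl, hl, hl]
  simp only [D1, D2, ← he]
  field_simp
  ring
end

section
/- Under the conformal β-change, the squared length of the torsion vector transforms as *c² = τ^{-1}[c² + ((n+1)/ *L) A_β], where A_β = c_β + ((n+1)/(4 *L)) m², c_β = c_i b^i, m² = m_i m^i, and τ = e^σ(*L/L). -/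
/-!
Pairing `*cᵢ = cᵢ + a mᵢ` with `*cᵏ`, where `a = (n+1)/(2 *L)`, the indicatory relations
`cᵢ lⁱ = mᵢ lⁱ = 0` kill every `lᵏ`-term and leave `τ⁻² · τ (c² + 2a c_β + a² m²)`.
Since `2a = (n+1)/ *L` and `a² = ((n+1)/ *L) · ((n+1)/(4 *L))`, this regroups as
`τ⁻¹ (c² + ((n+1)/ *L) A_β)`.
-/

open scoped Matrix

theorem add_smul_dotProduct_of_indicatory {ι R : Type*} [Fintype ι] [CommRing R]
    {c m cup mup lup : ι → R}
    {a τ c2 m2 cβ : R} (hcc : c ⬝ᵥ cup = c2) (hmm : m ⬝ᵥ mup = m2)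
    (hcl : c ⬝ᵥ lup = 0) (hml : m ⬝ᵥ lup = 0) (hcm : c ⬝ᵥ mup = cβ) (hmc : m ⬝ᵥ cup = cβ) :
    (c + a • m) ⬝ᵥ (τ • cup - cβ • lup + a • (τ • mup - m2 • lup)) =
      τ * (c2 + 2 * a * cβ + a ^ 2 * m2) := by
  simp only [add_dotProduct, smul_dotProduct, dotProduct_add, dotProduct_sub, dotProduct_smul,
    hcc, hmm, hcl, hml, hcm, hmc, smul_eq_mul]
  ring

theorem inv_sq_mul_self {G₀ : Type*} [GroupWithZero G₀] (a : G₀) : a⁻¹ ^ 2 * a = a⁻¹ := by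
  simpa [sq] using mul_self_mul_inv a⁻¹

theorem conformal_beta_change_c_squared_general
    (n : ℕ) (c cup m mup lup : Fin n → ℝ)
    (Ls τ : ℝ)
    (c2 m2 cβ : ℝ)
    (hc2 : c2 = ∑ i, c i * cup i)
    (hm2 : m2 = ∑ i, m i * mup i)
    (hcl : (∑ i, c i * lup i) = 0)
    (hml : (∑ i, m i * lup i) = 0)
    (hcm : (∑ i, c i * mup i) = cβ)
    (hmc : (∑ i, m i * cup i) = cβ)
    (csLow csUp : Fin n → ℝ)
    (hcsLow : ∀ i, csLow i = c i + (((n : ℝ) + 1) / (2 * Ls)) * m i)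
    (hcsUp : ∀ k, csUp k = τ⁻¹^2 *
      (τ * cup k - cβ * lup k + (((n : ℝ) + 1) / (2 * Ls)) * (τ * mup k - m2 * lup k)))
    (Aβ : ℝ) (hAβ : Aβ = cβ + (((n : ℝ) + 1) / (4 * Ls)) * m2) :
    (∑ i, csLow i * csUp i) = τ⁻¹ * (c2 + (((n : ℝ) + 1) / Ls) * Aβ) := by
  set a := ((n : ℝ) + 1) / (2 * Ls) with ha
  have hLow : csLow = c + a • m := funext fun i => by simp [hcsLow]
  have hUp : csUp = τ⁻¹ ^ 2 • (τ • cup - cβ • lup + a • (τ • mup - m2 • lup)) :=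
    funext fun k => by simp [hcsUp]
  change csLow ⬝ᵥ csUp = _
  rw [hLow, hUp, dotProduct_smul,
    add_smul_dotProduct_of_indicatory hc2.symm hm2.symm hcl hml hcm hmc, smul_eq_mul,
    ← mul_assoc, inv_sq_mul_self, hAβ, ha]
  ring

/-- Under the conformal β-change, the squared length of the torsion vector
transforms as `*c² = τ⁻¹[c² + ((n+1)/ *L) A_β]`, where `A_β = c_β + ((n+1)/(4 *L)) m²`,
`c_β = cᵢ bⁱ`, `m² = mᵢ mⁱ`, and `τ = e^σ(*L/L)`. -/
theorem conformal_beta_change_c_squared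
    (n : ℕ) (c cup m mup l lup b bup : Fin n → ℝ)
    (σ L β Ls τ : ℝ)
    (hLs : Ls = Real.exp σ * L + β) (hL0 : L ≠ 0) (hLs0 : Ls ≠ 0)
    (hτ : τ = Real.exp σ * (Ls / L)) (hτ0 : τ ≠ 0)
    (c2 m2 cβ : ℝ)
    (hc2 : c2 = ∑ i, c i * cup i)
    (hm2 : m2 = ∑ i, m i * mup i)
    (hcβ : cβ = ∑ i, c i * bup i)
    (hcl : (∑ i, c i * lup i) = 0)
    (hml : (∑ i, m i * lup i) = 0)
    (hcm : (∑ i, c i * mup i) = cβ)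
    (hmc : (∑ i, m i * cup i) = cβ)
    (csLow csUp : Fin n → ℝ)
    (hcsLow : ∀ i, csLow i = c i + (((n : ℝ) + 1) / (2 * Ls)) * m i)
    (hcsUp : ∀ k, csUp k = τ⁻¹^2 *
      (τ * cup k - cβ * lup k + (((n : ℝ) + 1) / (2 * Ls)) * (τ * mup k - m2 * lup k)))
    (Aβ : ℝ) (hAβ : Aβ = cβ + (((n : ℝ) + 1) / (4 * Ls)) * m2) :
    (∑ i, csLow i * csUp i) = τ⁻¹ * (c2 + (((n : ℝ) + 1) / Ls) * Aβ) :=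
  conformal_beta_change_c_squared_general n c cup m mup lup Ls τ c2 m2 cβ hc2 hm2 hcl hml hcm hmc
    csLow csUp hcsLow hcsUp Aβ hAβ
end

section
/- Under a conformal β-change, the tensor K_{ijk} = [c_{ijk} − (h_{ij}M_k + h_{kj}M_i + h_{ki}M_j)]/L with M_i = c_i/(n+1) is σ-invariant: *K_{ijk} = e^σ K_{ijk}. -/
/-! Under the change, `*M_i = M_i + m_i/(2 *L)`, so the correction `m`-terms in `*c_{ijk}` and in
`*h_{ij} *M_k + …` are the same symmetrized product `h ⊗ m` and cancel: the numerator of `*K_{ijk}`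
is `τ` times that of `K_{ijk}`, and `τ / *L = e^σ / L`. -/

lemma add_div_mul_div_eq {N : ℝ} (hN : N ≠ 0) (c m a : ℝ) :
    (c + N / a * m) / N = c / N + m / a := by
  rw [add_div, div_mul_eq_mul_div, mul_div_assoc, mul_div_cancel_left₀ _ hN]

lemma scaled_sub_trace_terms_eq {ι : Type*} {h : ι → ι → ℝ} (hsym : ∀ i j, h i j = h j i)
    (c3 : ι → ι → ι → ℝ) (M m : ι → ℝ) (τ a : ℝ) (i j k : ι) :
    τ * (c3 i j k + a * (h i j * m k + h j k * m i + h k i * m j)) -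
        (τ * h i j * (M k + a * m k) + τ * h k j * (M i + a * m i) + τ * h k i * (M j + a * m j)) =
      τ * (c3 i j k - (h i j * M k + h k j * M i + h k i * M j)) := by
  rw [hsym j k]
  ring

theorem conformal_beta_change_K_invariant_general
    (n : ℕ) (c3 cs3 : Fin n → Fin n → Fin n → ℝ)
    (h hs : Fin n → Fin n → ℝ)
    (c cs m : Fin n → ℝ)
    (σ L Ls τ : ℝ)
    (hLs0 : Ls ≠ 0)
    (hτ : τ = Real.exp σ * (Ls / L))
    (hcs3 : ∀ i j k, cs3 i j k =
      τ * (c3 i j k + (1 / (2 * Ls)) * (h i j * m k + h j k * m i + h k i * m j)))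
    (hhs : ∀ i j, hs i j = τ * h i j)
    (hhsym : ∀ i j, h i j = h j i)
    (hcs : ∀ i, cs i = c i + (((n : ℝ) + 1) / (2 * Ls)) * m i)
    (M Ms : Fin n → ℝ)
    (hM : ∀ i, M i = c i / ((n : ℝ) + 1))
    (hMs : ∀ i, Ms i = cs i / ((n : ℝ) + 1))
    (K Ks : Fin n → Fin n → Fin n → ℝ)
    (hK : ∀ i j k, K i j k =
      (c3 i j k - (h i j * M k + h k j * M i + h k i * M j)) / L)
    (hKs : ∀ i j k, Ks i j k =
      (cs3 i j k - (hs i j * Ms k + hs k j * Ms i + hs k i * Ms j)) / Ls) :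
    ∀ i j k, Ks i j k = Real.exp σ * K i j k := by
  intro i j k
  have hMs_eq : ∀ i, Ms i = M i + 1 / (2 * Ls) * m i := fun i => by
    rw [hMs, hcs, add_div_mul_div_eq (by positivity), hM, one_div_mul_eq_div]
  rw [hKs, hcs3, hhs, hhs, hhs, hMs_eq, hMs_eq, hMs_eq,
    scaled_sub_trace_terms_eq hhsym, hK, hτ]
  field_simp

/-- Under a conformal β-change, the tensor
`K_{ijk} = [c_{ijk} − (h_{ij}M_k + h_{kj}M_i + h_{ki}M_j)]/L` with `M_i = c_i/(n+1)`
is σ-invariant: `*K_{ijk} = e^σ K_{ijk}`. -/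
theorem conformal_beta_change_K_invariant
    (n : ℕ) (c3 cs3 : Fin n → Fin n → Fin n → ℝ)
    (h hs : Fin n → Fin n → ℝ)
    (c cs m : Fin n → ℝ)
    (σ L β Ls τ : ℝ)
    (hLs : Ls = Real.exp σ * L + β) (hL0 : L ≠ 0) (hLs0 : Ls ≠ 0)
    (hτ : τ = Real.exp σ * (Ls / L))
    (hcs3 : ∀ i j k, cs3 i j k =
      τ * (c3 i j k + (1 / (2 * Ls)) * (h i j * m k + h j k * m i + h k i * m j)))
    (hhs : ∀ i j, hs i j = τ * h i j)
    (hhsym : ∀ i j, h i j = h j i)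
    (hcs : ∀ i, cs i = c i + (((n : ℝ) + 1) / (2 * Ls)) * m i)
    (M Ms : Fin n → ℝ)
    (hM : ∀ i, M i = c i / ((n : ℝ) + 1))
    (hMs : ∀ i, Ms i = cs i / ((n : ℝ) + 1))
    (K Ks : Fin n → Fin n → Fin n → ℝ)
    (hK : ∀ i j k, K i j k =
      (c3 i j k - (h i j * M k + h k j * M i + h k i * M j)) / L)
    (hKs : ∀ i j k, Ks i j k =
      (cs3 i j k - (hs i j * Ms k + hs k j * Ms i + hs k i * Ms j)) / Ls) :
    ∀ i j k, Ks i j k = Real.exp σ * K i j k :=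
  conformal_beta_change_K_invariant_general n c3 cs3 h hs c cs m σ L Ls τ hLs0 hτ hcs3 hhs hhsym hcs
    M Ms hM hMs K Ks hK hKs
end

section
/- Under a conformal β-change, the tensor η_{hijk} = [S_{hijk} − (h_{jh}M_{ik} + h_{ik}M_{jh} − h_{hk}M_{ij} − h_{ij}M_{hk})]/L is σ-invariant: *η_{hijk} = e^σ η_{hijk}. Consequently (M,L) is S₄-like if and only if (M,*L) is S₄-like. -/
/-!
Write `h ∧ M` (`s4Tensor h M`) for `h_{jh}M_{ik} + h_{ik}M_{jh} − h_{hk}M_{ij} − h_{ij}M_{hk}`, which is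
bilinear in `(h, M)`. Since `*h = τ h` and `*M = M − H/(2*L)`, the `H`-terms of `*h ∧ *M` are
exactly those in the formula for `*S`, so the deviation `S − h ∧ M` is multiplied by `τ`. Hence
`η = (S − h ∧ M)/L` picks up the factor `τ L/*L = e^σ`, and S₄-likeness (vanishing of the
deviation) is preserved because `τ ≠ 0`.
-/

section S4Tensor

variable {ι R : Type*}

def s4Tensor [CommRing R] (g M : ι → ι → R) (a i j k : ι) : R :=
  g j a * M i k + g i k * M j a - g a k * M i j - g i j * M a k

theorem sub_s4Tensor_eq_mul_of_conformal [CommRing R] {S Ss : ι → ι → ι → ι → R}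
    {g gs H M Ms : ι → ι → R} {τ c : R}
    (hS : ∀ a i j k, Ss a i j k = τ * S a i j k - τ * c * s4Tensor g H a i j k)
    (hg : ∀ i j, gs i j = τ * g i j) (hM : ∀ i j, Ms i j = M i j - c * H i j)
    (a i j k : ι) :
    Ss a i j k - s4Tensor gs Ms a i j k = τ * (S a i j k - s4Tensor g M a i j k) := by
  simp only [hS, s4Tensor, hg, hM]
  ring

theorem forall_eq_iff_of_sub_eq_mul [CommRing R] [NoZeroDivisors R]
    {S T Ss Ts : ι → ι → ι → ι → R} {τ : R} (hτ : τ ≠ 0)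
    (hdev : ∀ a i j k, Ss a i j k - Ts a i j k = τ * (S a i j k - T a i j k)) :
    (∀ a i j k, S a i j k = T a i j k) ↔ ∀ a i j k, Ss a i j k = Ts a i j k := by
  simp only [← sub_eq_zero (a := S _ _ _ _), ← sub_eq_zero (a := Ss _ _ _ _), hdev, mul_eq_zero,
    hτ, false_or]

end S4Tensor

theorem conformal_beta_change_S4_like_general
    (n : ℕ)
    (S4 Ss4 : Fin n → Fin n → Fin n → Fin n → ℝ)
    (h hs H M Ms : Fin n → Fin n → ℝ)
    (σ L Ls τ : ℝ)
    (hLs0 : Ls ≠ 0)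
    (hτ : τ = Real.exp σ * (Ls / L)) (hτ0 : τ ≠ 0)
    (hSs4 : ∀ h' i j k, Ss4 h' i j k = τ * S4 h' i j k
      - (τ / (2 * Ls)) * (h i k * H j h' + h j h' * H i k - h h' k * H i j - h i j * H h' k))
    (hhs : ∀ i j, hs i j = τ * h i j)
    (hMs : ∀ i j, Ms i j = M i j - (1 / (2 * Ls)) * H i j)
    (η ηs : Fin n → Fin n → Fin n → Fin n → ℝ)
    (hη : ∀ h' i j k, η h' i j k = (S4 h' i j k
      - (h j h' * M i k + h i k * M j h' - h h' k * M i j - h i j * M h' k)) / L)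
    (hηs : ∀ h' i j k, ηs h' i j k = (Ss4 h' i j k
      - (hs j h' * Ms i k + hs i k * Ms j h' - hs h' k * Ms i j - hs i j * Ms h' k)) / Ls) :
    (∀ h' i j k, ηs h' i j k = Real.exp σ * η h' i j k) ∧
    ((∀ h' i j k, S4 h' i j k =
        h j h' * M i k + h i k * M j h' - h h' k * M i j - h i j * M h' k) ↔
      (∀ h' i j k, Ss4 h' i j k =
        hs j h' * Ms i k + hs i k * Ms j h' - hs h' k * Ms i j - hs i j * Ms h' k)) := by
  have hSs4' : ∀ a i j k,
      Ss4 a i j k = τ * S4 a i j k - τ * (1 / (2 * Ls)) * s4Tensor h H a i j k := fun a i j k => by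
    rw [hSs4, s4Tensor]; ring
  have hdev := sub_s4Tensor_eq_mul_of_conformal hSs4' hhs hMs
  refine ⟨fun a i j k => ?_, ?_⟩
  · calc ηs a i j k = τ / Ls * (S4 a i j k - s4Tensor h M a i j k) := by
          rw [hηs, ← s4Tensor, hdev]; ring
      _ = Real.exp σ * η a i j k := by
          rw [hη, ← s4Tensor, hτ]; field_simp
  · exact forall_eq_iff_of_sub_eq_mul hτ0 hdev

/-- Under a conformal β-change, the tensor
`η_{hijk} = [S_{hijk} − (h_{jh}M_{ik} + h_{ik}M_{jh} − h_{hk}M_{ij} − h_{ij}M_{hk})]/L`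
is σ-invariant: `*η_{hijk} = e^σ η_{hijk}`. Consequently `(M,L)` is S₄-like iff `(M,*L)`
is S₄-like. -/
theorem conformal_beta_change_S4_like
    (n : ℕ) (hn : 4 < n)
    (S4 Ss4 : Fin n → Fin n → Fin n → Fin n → ℝ)
    (h hs H M Ms : Fin n → Fin n → ℝ)
    (σ L β Ls τ : ℝ)
    (hLs : Ls = Real.exp σ * L + β) (hL0 : L ≠ 0) (hLs0 : Ls ≠ 0)
    (hτ : τ = Real.exp σ * (Ls / L)) (hτ0 : τ ≠ 0)
    (hSs4 : ∀ h' i j k, Ss4 h' i j k = τ * S4 h' i j k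
      - (τ / (2 * Ls)) * (h i k * H j h' + h j h' * H i k - h h' k * H i j - h i j * H h' k))
    (hhs : ∀ i j, hs i j = τ * h i j)
    (hMs : ∀ i j, Ms i j = M i j - (1 / (2 * Ls)) * H i j)
    (hHsym : ∀ i j, H i j = H j i)
    (hhsym : ∀ i j, h i j = h j i)
    (η ηs : Fin n → Fin n → Fin n → Fin n → ℝ)
    (hη : ∀ h' i j k, η h' i j k = (S4 h' i j k
      - (h j h' * M i k + h i k * M j h' - h h' k * M i j - h i j * M h' k)) / L)
    (hηs : ∀ h' i j k, ηs h' i j k = (Ss4 h' i j k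
      - (hs j h' * Ms i k + hs i k * Ms j h' - hs h' k * Ms i j - hs i j * Ms h' k)) / Ls) :
    (∀ h' i j k, ηs h' i j k = Real.exp σ * η h' i j k) ∧
    ((∀ h' i j k, S4 h' i j k =
        h j h' * M i k + h i k * M j h' - h h' k * M i j - h i j * M h' k) ↔
      (∀ h' i j k, Ss4 h' i j k =
        hs j h' * Ms i k + hs i k * Ms j h' - hs h' k * Ms i j - hs i j * Ms h' k)) :=
  conformal_beta_change_S4_like_general n S4 Ss4 h hs H M Ms σ L Ls τ hLs0 hτ hτ0 hSs4 hhs hMs η ηs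
    hη hηs
end
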